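/- Paraconsistency and nonmonotonicity of four-valued minimal entailment with 𝓘 = {b, n}: for distinct atoms p and q and Γ = {p, ¬(p∧¬q)}, it holds that (i) Γ ⊨^{b,n}_F q, and (ii) Γ ∪ {¬q} ⊭^{b,n}_F q; in particular, ⊨^{b,n}_F is nonmonotonic. -/

import Mathlib

/-- Truth values of the four-valued logic F: f, n, b, t, where in the truth
order f is least, t is greatest, and n, b are incomparable. -/
inductive V4 : Type
  | f | n | b | t
deriving DecidableEq, Repr

namespace V4

/-- Negation: f ↦ t, t ↦ f, and n, b are fixed. -/
def negv : V4 → V4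
  | .f => .t
  | .t => .f
  | .n => .n
  | .b => .b

/-- Conjunction: the meet with respect to the truth order (f least, t
greatest, n and b incomparable, so the meet of n and b is f). -/
def conjv : V4 → V4 → V4
  | .t, y => y
  | .f, _ => .f
  | .n, .t => .n
  | .n, .n => .n
  | .n, .b => .f
  | .n, .f => .f
  | .b, .t => .b
  | .b, .b => .b
  | .b, .n => .f
  | .b, .f => .f

/-- Implication: `x ⊃ y` is `y` if `x` is designated (b or t), and `t`
otherwise. -/
def impv : V4 → V4 → V4
  | .b, y => y
  | .t, y => y
  | .f, _ => .t
  | .n, _ => .t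

end V4

/-- Formulas of the four-valued logic F, with atoms indexed by ℕ, the
constants B and N, negation, conjunction, and implication. -/
inductive FForm : Type
  | atom : ℕ → FForm
  | bb : FForm
  | nn : FForm
  | neg : FForm → FForm
  | conj : FForm → FForm → FForm
  | imp : FForm → FForm → FForm
deriving DecidableEq

namespace FForm

/-- The valuation of F extending an interpretation `I : ℕ → V4`. -/
def val (I : ℕ → V4) : FForm → V4
  | atom p => I p
  | bb => .b
  | nn => .n
  | neg φ => (φ.val I).negv
  | conj φ ψ => (φ.val I).conjv (ψ.val I)
  | imp φ ψ => (φ.val I).impv (ψ.val I)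

/-- `I` is an F-model of `φ`: `v_I(φ)` is designated, i.e. b or t. -/
def IsModel (I : ℕ → V4) (φ : FForm) : Prop := φ.val I = .b ∨ φ.val I = .t

/-- `I` is an F-model of the theory `Γ`. -/
def IsModelSet (I : ℕ → V4) (Γ : Set FForm) : Prop := ∀ φ ∈ Γ, IsModel I φ

end FForm

/-- `Γ ⊨_F Δ`: every F-model of `Γ` is an F-model of some member of `Δ`. -/
def FEntails (Γ Δ : Set FForm) : Prop :=
  ∀ I, FForm.IsModelSet I Γ → ∃ δ ∈ Δ, FForm.IsModel I δ

/-- `I` is an F-model of `Γ` that is most consistent relative to `𝓘 ⊆ V4`: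
no F-model `J` of `Γ` makes a strictly smaller set of atoms take a value
in `𝓘`. -/
def FMostConsistentModel (𝓘 : Set V4) (I : ℕ → V4) (Γ : Set FForm) : Prop :=
  FForm.IsModelSet I Γ ∧
    ¬ ∃ J : ℕ → V4, FForm.IsModelSet J Γ ∧ {p : ℕ | J p ∈ 𝓘} ⊂ {p : ℕ | I p ∈ 𝓘}

/-- `Γ ⊨^𝓘_F Δ`: every F-model of `Γ` most consistent relative to `𝓘` is an
F-model of some member of `Δ`. -/
def FMinEntails (𝓘 : Set V4) (Γ Δ : Set FForm) : Prop :=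
  ∀ I, FMostConsistentModel 𝓘 I Γ → ∃ δ ∈ Δ, FForm.IsModel I δ

/-!
Relative to `{b, n}`, a most consistent model of a theory with a classical model (all atoms `t`)
is itself classical, so it makes `p` true; then `¬(p ∧ ¬q)` takes the value of `q`, which is
therefore designated. Adding `¬q` destroys every classical model: once `p` is `t`, both `q` and
`¬q` are designated, forcing `q = b`. Hence the model with `p = b` and every other atom `f`, whose
only non-classical atom is `p`, is most consistent, yet it falsifies `q`.
-/

namespace V4

theorem negv_negv (v : V4) : v.negv.negv = v := by
  cases v <;> rfl

theorem eq_t_of_designated_of_notMem {v : V4} (hv : v = b ∨ v = t) (h : v ∉ ({b, n} : Set V4)) :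
    v = t :=
  hv.resolve_left fun hb => h (.inl hb)

theorem eq_b_of_designated_of_negv_designated {v : V4} (hv : v = b ∨ v = t)
    (hneg : v.negv = b ∨ v.negv = t) : v = b := by
  cases v <;> simp_all [negv]

end V4

namespace FForm

theorem isModel_neg_conj_neg_iff {I : ℕ → V4} {p : ℕ} (q : ℕ) (hp : I p = .t) :
    IsModel I (neg (conj (atom p) (neg (atom q)))) ↔ IsModel I (atom q) := by
  simp only [IsModel, val, hp, V4.conjv, V4.negv_negv]

variable {I : ℕ → V4} {p q : ℕ}

theorem isModel_atom_of_notMem (hp : IsModel I (atom p)) (hpc : I p ∉ ({.b, .n} : Set V4))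
    (h : IsModel I (neg (conj (atom p) (neg (atom q))))) : IsModel I (atom q) :=
  (isModel_neg_conj_neg_iff q (V4.eq_t_of_designated_of_notMem hp hpc)).1 h

theorem mem_or_mem_of_isModel_neg (hp : IsModel I (atom p))
    (h : IsModel I (neg (conj (atom p) (neg (atom q))))) (hq : IsModel I (neg (atom q))) :
    I p ∈ ({.b, .n} : Set V4) ∨ I q ∈ ({.b, .n} : Set V4) :=
  or_iff_not_imp_left.2 fun hpc =>
    .inl (V4.eq_b_of_designated_of_negv_designated (isModel_atom_of_notMem hp hpc h) hq)

end FForm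

theorem FMostConsistentModel.forall_notMem {𝓘 : Set V4} {I J : ℕ → V4} {Γ : Set FForm}
    (hI : FMostConsistentModel 𝓘 I Γ) (hJ : FForm.IsModelSet J Γ) (hJ𝓘 : ∀ r, J r ∉ 𝓘) :
    ∀ r, I r ∉ 𝓘 := fun r hr =>
  hI.2 ⟨J, hJ, by simpa only [hJ𝓘, Set.ofPred_false, Set.empty_ssubset] using ⟨r, hr⟩⟩

theorem fMostConsistentModel_of_subsingleton {𝓘 : Set V4} {I : ℕ → V4} {Γ : Set FForm}
    (hI : FForm.IsModelSet I Γ) (hsub : {r | I r ∈ 𝓘}.Subsingleton)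
    (hΓ : ∀ J, FForm.IsModelSet J Γ → ∃ r, J r ∈ 𝓘) : FMostConsistentModel 𝓘 I Γ := by
  refine ⟨hI, fun ⟨J, hJ, hJI⟩ => hJI.2 fun s (hs : I s ∈ 𝓘) => ?_⟩
  obtain ⟨r, hr⟩ := hΓ J hJ
  rwa [hsub hs (hJI.1 hr)]

/-- Paraconsistency and nonmonotonicity of four-valued minimal entailment with
`𝓘 = {b, n}`: for distinct atoms `p`, `q` and `Γ = {p, ¬(p ∧ ¬q)}`,
(i) `Γ ⊨^{b,n}_F q`, and (ii) `Γ ∪ {¬q} ⊭^{b,n}_F q`. -/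
theorem F_paraconsistent_nonmonotonic_bn (p q : ℕ) (hpq : p ≠ q) :
    FMinEntails {V4.b, V4.n}
        {FForm.atom p, FForm.neg (FForm.conj (FForm.atom p) (FForm.neg (FForm.atom q)))}
        {FForm.atom q} ∧
    ¬ FMinEntails {V4.b, V4.n}
        ({FForm.atom p, FForm.neg (FForm.conj (FForm.atom p) (FForm.neg (FForm.atom q)))}
          ∪ {FForm.neg (FForm.atom q)})
        {FForm.atom q} := by
  refine ⟨fun I hI => ⟨_, rfl, ?_⟩, fun hentails => ?_⟩
  · have hclassical := hI.forall_notMem (J := fun _ => .t)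
      (by simp [FForm.IsModelSet, FForm.IsModel, FForm.val, V4.negv, V4.conjv]) (by simp)
    exact FForm.isModel_atom_of_notMem (hI.1 _ (by simp)) (hclassical p) (hI.1 _ (by simp))
  · set I : ℕ → V4 := Function.update (fun _ => .f) p .b
    have hIq : I q = .f := Function.update_of_ne hpq.symm _ _
    have hI : FMostConsistentModel {V4.b, V4.n} I
        ({FForm.atom p, FForm.neg (FForm.conj (FForm.atom p) (FForm.neg (FForm.atom q)))}
          ∪ {FForm.neg (FForm.atom q)}) := by
      refine fMostConsistentModel_of_subsingleton ?_
        ((Set.subsingleton_singleton (a := p)).anti ?_) fun J hJ => ?_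
      · simp [FForm.IsModelSet, FForm.IsModel, FForm.val, I, hIq, V4.negv, V4.conjv]
      · intro r hr
        by_contra hrp
        simp [I, Function.update_of_ne hrp] at hr
      · rcases FForm.mem_or_mem_of_isModel_neg (hJ (.atom p) (by simp)) (hJ _ (by simp))
          (hJ (.neg (.atom q)) (by simp)) with h | h
        exacts [⟨p, h⟩, ⟨q, h⟩]
    obtain ⟨_, rfl, hq⟩ := hentails I hI
    simp [FForm.IsModel, FForm.val, hIq] at hq
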